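/- Let λ ∈ ℂ∖ℝ and define the polynomial map F : ℂ²×ℂ² → ℂ²×ℂ², F((u₀,u₁),(v₀,v₁)) = ((A₀,A₁),(B₀,B₁)), where A₀ = λv₀((λ̄−1)u₀v₁ + (λ−λ̄)u₁v₁ + (1−λ)u₁v₀), A₁ = v₁(λ̄(λ−1)u₀v₁ + λ(1−λ̄)u₁v₀ + (λ̄−λ)u₀v₀), B₀ = −λ̄u₀((λ̄−1)u₀v₁ + (λ−λ̄)u₁v₁ + (1−λ)u₁v₀), B₁ = −u₁(λ̄(λ−1)u₀v₁ + λ(1−λ̄)u₁v₀ + (λ̄−λ)u₀v₀). Then: (i) all four polynomials A₀, A₁, B₀, B₁ vanish at each of the four points ((1,0),(1,0)), ((0,1),(0,1)), ((1,1),(1,1)) and ((λ,1),(λ̄,1)), so the induced rational self-map of ℙ¹(ℂ)×ℙ¹(ℂ) has p = ([1:0],[1:0]), q = ([0:1],[0:1]), r = ([1:1],[1:1]) and s = ([λ:1],[λ̄:1]) among its base points; (ii) there exist polynomials P and Q, not identically zero, with F(F(u,v)) = (P(u,v)·u, Q(u,v)·v) identically, i.e. the induced rational map is a birational involution; and (iii)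 F(σ(u,v)) = σ(F(u,v)) for all (u,v), where σ((u₀,u₁),(v₀,v₁)) := ((v̄₀,v̄₁),(ū₀,ū₁)), i.e. the involution is real with respect to the real structure of Q_{3,1}. -/
import Mathlib


noncomputable section

open ComplexConjugate

/-- The common factor `(λ̄−1)u₀v₁ + (λ−λ̄)u₁v₁ + (1−λ)u₁v₀` of `A₀` and `B₀`. -/
def inn1 (lam : ℂ) (w : (Fin 2 → ℂ) × (Fin 2 → ℂ)) : ℂ :=
  (conj lam - 1) * w.1 0 * w.2 1 + (lam - conj lam) * w.1 1 * w.2 1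
    + (1 - lam) * w.1 1 * w.2 0

/-- The common factor `λ̄(λ−1)u₀v₁ + λ(1−λ̄)u₁v₀ + (λ̄−λ)u₀v₀` of `A₁` and `B₁`. -/
def inn2 (lam : ℂ) (w : (Fin 2 → ℂ) × (Fin 2 → ℂ)) : ℂ :=
  conj lam * (lam - 1) * w.1 0 * w.2 1 + lam * (1 - conj lam) * w.1 1 * w.2 0
    + (conj lam - lam) * w.1 0 * w.2 0

/-- The polynomial map `F((u₀,u₁),(v₀,v₁)) = ((A₀, A₁), (B₀, B₁))` with
`A₀ = λv₀((λ̄−1)u₀v₁ + (λ−λ̄)u₁v₁ + (1−λ)u₁v₀)`,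
`A₁ = v₁(λ̄(λ−1)u₀v₁ + λ(1−λ̄)u₁v₀ + (λ̄−λ)u₀v₀)`,
`B₀ = −λ̄u₀((λ̄−1)u₀v₁ + (λ−λ̄)u₁v₁ + (1−λ)u₁v₀)`,
`B₁ = −u₁(λ̄(λ−1)u₀v₁ + λ(1−λ̄)u₁v₀ + (λ̄−λ)u₀v₀)`. -/
def F17 (lam : ℂ) (w : (Fin 2 → ℂ) × (Fin 2 → ℂ)) : (Fin 2 → ℂ) × (Fin 2 → ℂ) :=
  (![lam * w.2 0 * inn1 lam w, w.2 1 * inn2 lam w],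
   ![-(conj lam) * w.1 0 * inn1 lam w, -(w.1 1) * inn2 lam w])

/-- The real structure `σ((u₀,u₁),(v₀,v₁)) = ((v̄₀,v̄₁),(ū₀,ū₁))` of the quadric `Q_{3,1}`,
at the level of vector representatives. -/
def sigmaVec (w : (Fin 2 → ℂ) × (Fin 2 → ℂ)) : (Fin 2 → ℂ) × (Fin 2 → ℂ) :=
  (fun i => conj (w.2 i), fun i => conj (w.1 i))


/-- The scalar multiplier witnessing that `F17` is an involution. -/
def P17 (lam : ℂ) (w : (Fin 2 → ℂ) × (Fin 2 → ℂ)) : ℂ :=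
  lam * conj lam * (lam - 1) * (conj lam - 1) * inn1 lam w * inn2 lam w *
    (conj lam * w.1 0 * w.2 1 - lam * w.1 1 * w.2 0) *
    (w.1 1 * w.2 0 - w.1 0 * w.2 1)

/-- Let `λ ∈ ℂ ∖ ℝ`. Then:
(i) all four polynomials `A₀, A₁, B₀, B₁` vanish at each of the four points
`((1,0),(1,0))`, `((0,1),(0,1))`, `((1,1),(1,1))` and `((λ,1),(λ̄,1))`, so the induced
rational self-map of `ℙ¹(ℂ) × ℙ¹(ℂ)` has `p`, `q`, `r`, `s` among its base points;
(ii) there are functions `P`, `Q`, not identically zero, with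
`F(F(u,v)) = (P(u,v) • u, Q(u,v) • v)` identically, i.e. the induced rational map is a
birational involution;
(iii) `F(σ(u,v)) = σ(F(u,v))` for all `(u,v)`, i.e. the involution is real with respect to
the real structure of `Q_{3,1}`. -/
theorem statement17 (lam : ℂ) (hl : lam.im ≠ 0) :
    -- (i)
    (F17 lam (![1, 0], ![1, 0]) = 0 ∧
     F17 lam (![0, 1], ![0, 1]) = 0 ∧
     F17 lam (![1, 1], ![1, 1]) = 0 ∧
     F17 lam (![lam, 1], ![conj lam, 1]) = 0) ∧
    -- (ii)
    (∃ P Q : (Fin 2 → ℂ) × (Fin 2 → ℂ) → ℂ, P ≠ 0 ∧ Q ≠ 0 ∧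
      ∀ w, F17 lam (F17 lam w) = (P w • w.1, Q w • w.2)) ∧
    -- (iii)
    (∀ w, F17 lam (sigmaVec w) = sigmaVec (F17 lam w)) := by
  have hlam0 : lam ≠ 0 := fun h => hl (by simp [h])
  have hlam1 : lam ≠ 1 := fun h => hl (by simp [h])
  have hclam0 : conj lam ≠ 0 := fun h => hlam0 (by simpa using congrArg conj h)
  have hclam1 : conj lam ≠ 1 := fun h => hlam1 (by simpa using congrArg conj h)
  have hclamsub : conj lam - lam ≠ 0 := by
    intro h
    have : conj lam = lam := by linear_combination h
    exact hl (by simpa [Complex.ext_iff, eq_comm, neg_eq_iff_add_eq_zero] using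
      (Complex.conj_eq_iff_im.mp this))
  refine ⟨⟨?_, ?_, ?_, ?_⟩, ?_, ?_⟩
  · refine Prod.ext ?_ ?_ <;> funext i <;> fin_cases i <;>
      simp [F17, inn1, inn2] <;> ring
  · refine Prod.ext ?_ ?_ <;> funext i <;> fin_cases i <;>
      simp [F17, inn1, inn2] <;> ring
  · refine Prod.ext ?_ ?_ <;> funext i <;> fin_cases i <;>
      simp [F17, inn1, inn2] <;> ring
  · refine Prod.ext ?_ ?_ <;> funext i <;> fin_cases i <;>
      simp [F17, inn1, inn2] <;> first | ring1 | exact Or.inr (by ring) | tauto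
  · refine ⟨P17 lam, P17 lam, ?_, ?_, ?_⟩
    · intro h
      have h0 := congrFun h (![1, 0], ![0, 1])
      simp only [P17, inn1, inn2, Pi.zero_apply] at h0
      norm_num at h0
      rcases h0 with h0 | h0 | h0 | h0 | h0 | h0 <;>
        simp_all [sub_eq_zero, mul_eq_zero]
    · intro h
      have h0 := congrFun h (![1, 0], ![0, 1])
      simp only [P17, inn1, inn2, Pi.zero_apply] at h0
      norm_num at h0
      rcases h0 with h0 | h0 | h0 | h0 | h0 | h0 <;>
        simp_all [sub_eq_zero, mul_eq_zero]
    · intro w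
      refine Prod.ext ?_ ?_ <;> funext i <;> fin_cases i <;>
        simp [F17, inn1, inn2, P17, smul_eq_mul] <;> ring
  · intro w
    refine Prod.ext ?_ ?_ <;> funext i <;> fin_cases i <;>
      simp [F17, inn1, inn2, sigmaVec, map_mul, map_add, map_sub, map_one] <;> ring
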